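/- arXiv:2411.11984 — 2 statements merged into one kernel-verified Lean document; each statement's English description precedes it below -/
import Mathlib

section
/- Let Y and Z_0, Z_1, …, Z_m be random variables such that for every t with 1 ≤ t ≤ m, the variable Z_t is conditionally independent of the tuple (Y, Z_0, …, Z_{t−2}) given Z_{t−1}. Then for every j with 1 ≤ j ≤ m, Y is conditionally independent of Z_j given Z_{j−1}, i.e. Y ⊥ Z_j | σ(Z_{j−1}), and consequently I[Y : Z_j | Z_{j−1}] = 0. (This is the probabilistic core of the paper's Theorem 1: once the model's reasoning path diverges from the ground-truth path at an unidentifiable step, its subsequent states Z_k, Z_{k+1}, … form a chain that Assumption 1's Bayesian network screens off from the true answer Y, so every subsequent step adds no information about Y.) -/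
open MeasureTheory ProbabilityTheory

/-- Conditional entropy `H[Y | X] = -E[log p(Y | X)]` for finite-valued random
variables, written out as a sum over the joint probability mass function. -/
noncomputable def condEntropy' {Ω S U : Type*} [MeasurableSpace Ω]
    [MeasurableSpace S] [MeasurableSpace U] [Fintype S] [Fintype U]
    (μ : Measure Ω) (Y : Ω → U) (X : Ω → S) : ℝ :=
  -∑ x : S, ∑ y : U,
    (μ (X ⁻¹' {x} ∩ Y ⁻¹' {y})).toReal *
      Real.log ((μ (X ⁻¹' {x} ∩ Y ⁻¹' {y})).toReal / (μ (X ⁻¹' {x})).toReal)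

/-- Conditional mutual information `I[Y : X | Z] = H[Y | Z] - H[Y | (X, Z)]`. -/
noncomputable def condMutualInfo' {Ω S T U : Type*} [MeasurableSpace Ω]
    [MeasurableSpace S] [MeasurableSpace T] [MeasurableSpace U]
    [Fintype S] [Fintype T] [Fintype U]
    (μ : Measure Ω) (Y : Ω → U) (X : Ω → S) (Z : Ω → T) : ℝ :=
  condEntropy' μ Y Z - condEntropy' μ Y (fun ω => (X ω, Z ω))

/-! Specialising the chain hypothesis at step `j` and forgetting the older states gives
`Y ⟂ Z j | Z (j - 1)`. For finite-valued variables, conditional independence of `Y` and `X`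
given `W` factorises every fibre of `W`:
`P(W = w, Y = y, X = x) P(W = w) = P(W = w, Y = y) P(W = w, X = x)`, both sides
being `P(W = w)²` times the two conditional distributions. Hence
`P(Y = y | X = x, W = w) = P(Y = y | W = w)` on every term that contributes to
`H[Y | (X, W)]`, so `H[Y | (X, W)] = H[Y | W]` and the conditional mutual information
vanishes. -/

lemma mul_log_div_eq_of_mul_eq {t r q p : ℝ} (h : t * p = q * r) (ht : 0 ≤ t) (htr : t ≤ r)
    (htp : t ≤ p) : t * Real.log (t / r) = t * Real.log (q / p) := by
  rcases ht.eq_or_lt with rfl | ht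
  · simp
  · rw [(div_eq_div_iff (by linarith) (by linarith)).mpr h]

namespace MeasureTheory

lemma sum_measureReal_inter_preimage_singleton {Ω S : Type*} {mΩ : MeasurableSpace Ω}
    {μ : Measure Ω} [IsFiniteMeasure μ] [MeasurableSpace S] [MeasurableSingletonClass S]
    [Fintype S] {X : Ω → S} (hX : Measurable X) (B : Set Ω) :
    ∑ x, μ.real (B ∩ X ⁻¹' {x}) = μ.real B := by
  have hsum := sum_measureReal_preimage_singleton (μ := μ.restrict B) Finset.univ
    (fun x _ => hX (measurableSet_singleton x))
  simpa [measureReal_restrict_apply (hX (measurableSet_singleton _)), Set.inter_comm] using hsum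

end MeasureTheory

namespace ProbabilityTheory

variable {α β Ω Ω' : Type*} {mα : MeasurableSpace α} {μ : Measure α} [IsFiniteMeasure μ]
  [MeasurableSpace β] [MeasurableSingletonClass β]
  [MeasurableSpace Ω] [StandardBorelSpace Ω] [Nonempty Ω]
  [MeasurableSpace Ω'] [StandardBorelSpace Ω'] [Nonempty Ω']
  {W : α → β} {Y : α → Ω} {X : α → Ω'} {s : Set Ω} {t : Set Ω'}

lemma measure_preimage_singleton_inter_eq_condDistrib_mul (hW : Measurable W) (hY : Measurable Y)
    (w : β) (hs : MeasurableSet s) :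
    μ (W ⁻¹' {w} ∩ Y ⁻¹' s) = condDistrib Y W μ w s * μ (W ⁻¹' {w}) := by
  rw [← setLIntegral_preimage_condDistrib hW hY.aemeasurable hs (measurableSet_singleton w),
    ← setLIntegral_const]
  exact setLIntegral_congr_fun (hW (measurableSet_singleton w)) fun a ha => by rw [ha]

variable [StandardBorelSpace α]

lemma CondIndepFun.measure_preimage_singleton_inter_inter_eq (hW : Measurable W)
    (hY : Measurable Y) (hX : Measurable X) (h : Y ⟂ᵢ[W, hW; μ] X) (w : β)
    (hs : MeasurableSet s) (ht : MeasurableSet t) :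
    μ (W ⁻¹' {w} ∩ Y ⁻¹' s ∩ X ⁻¹' t)
      = condDistrib Y W μ w s * condDistrib X W μ w t * μ (W ⁻¹' {w}) := by
  have hbox : MeasurableSet ({w} ×ˢ s ×ˢ t) := (measurableSet_singleton w).prod (hs.prod ht)
  have hkernel (b : β) :
      (Kernel.id ×ₖ (condDistrib Y W μ ×ₖ condDistrib X W μ)) b ({w} ×ˢ s ×ˢ t)
        = ({w} : Set β).indicator (fun b => condDistrib Y W μ b s * condDistrib X W μ b t) b := by
    rw [Kernel.prod_apply_prod, Kernel.prod_apply_prod, Kernel.id_apply,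
      Measure.dirac_apply' _ (measurableSet_singleton w)]
    by_cases hb : b ∈ ({w} : Set β) <;> simp [hb]
  have hlaw := congrArg (fun ν => ν ({w} ×ˢ s ×ˢ t))
    ((condIndepFun_iff_map_prod_eq_prod_condDistrib_prod_condDistrib hY hX hW).mp h)
  simp only [Measure.map_apply (hW.prodMk (hY.prodMk hX)) hbox,
    Measure.bind_apply hbox (Kernel.aemeasurable _), hkernel,
    lintegral_indicator (measurableSet_singleton w), lintegral_singleton,
    Measure.map_apply hW (measurableSet_singleton w)] at hlaw
  rwa [Set.inter_assoc]

lemma CondIndepFun.measureReal_inter_mul_eq (hW : Measurable W) (hY : Measurable Y)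
    (hX : Measurable X) (h : Y ⟂ᵢ[W, hW; μ] X) (w : β)
    (hs : MeasurableSet s) (ht : MeasurableSet t) :
    μ.real (W ⁻¹' {w} ∩ Y ⁻¹' s ∩ X ⁻¹' t) * μ.real (W ⁻¹' {w})
      = μ.real (W ⁻¹' {w} ∩ Y ⁻¹' s) * μ.real (W ⁻¹' {w} ∩ X ⁻¹' t) := by
  simp only [measureReal_def, ← ENNReal.toReal_mul]
  rw [h.measure_preimage_singleton_inter_inter_eq hW hY hX w hs ht,
    measure_preimage_singleton_inter_eq_condDistrib_mul hW hY w hs,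
    measure_preimage_singleton_inter_eq_condDistrib_mul hW hX w ht]
  congr 1
  ring

end ProbabilityTheory

lemma condEntropy'_prod_eq_of_forall_mul_eq {Ω S T U : Type*} {mΩ : MeasurableSpace Ω}
    {μ : Measure Ω} [IsFiniteMeasure μ] [MeasurableSpace S] [MeasurableSingletonClass S]
    [Fintype S] [MeasurableSpace T] [Fintype T] [MeasurableSpace U] [Fintype U]
    {X : Ω → S} {W : Ω → T} {Y : Ω → U} (hX : Measurable X)
    (hfact : ∀ w y x, μ.real (W ⁻¹' {w} ∩ Y ⁻¹' {y} ∩ X ⁻¹' {x}) * μ.real (W ⁻¹' {w})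
      = μ.real (W ⁻¹' {w} ∩ Y ⁻¹' {y}) * μ.real (W ⁻¹' {w} ∩ X ⁻¹' {x})) :
    condEntropy' μ Y (fun ω => (X ω, W ω)) = condEntropy' μ Y W := by
  have hpre (x : S) (w : T) : (fun ω => (X ω, W ω)) ⁻¹' {(x, w)} = W ⁻¹' {w} ∩ X ⁻¹' {x} := by
    rw [← Set.singleton_prod_singleton, Set.mk_preimage_prod, Set.inter_comm]
  simp only [condEntropy', ← measureReal_def, hpre, Set.inter_right_comm _ (X ⁻¹' _)]
  rw [Fintype.sum_prod_type, Finset.sum_comm]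
  congr 1
  refine Finset.sum_congr rfl fun w _ => ?_
  rw [Finset.sum_comm]
  refine Finset.sum_congr rfl fun y _ => ?_
  have hterm (x : S) : μ.real (W ⁻¹' {w} ∩ Y ⁻¹' {y} ∩ X ⁻¹' {x})
        * Real.log (μ.real (W ⁻¹' {w} ∩ Y ⁻¹' {y} ∩ X ⁻¹' {x}) / μ.real (W ⁻¹' {w} ∩ X ⁻¹' {x}))
      = μ.real (W ⁻¹' {w} ∩ Y ⁻¹' {y} ∩ X ⁻¹' {x})
        * Real.log (μ.real (W ⁻¹' {w} ∩ Y ⁻¹' {y}) / μ.real (W ⁻¹' {w})) :=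
    mul_log_div_eq_of_mul_eq (hfact w y x) measureReal_nonneg
      (measureReal_mono (Set.inter_subset_inter_left _ Set.inter_subset_left))
      (measureReal_mono (Set.inter_subset_left.trans Set.inter_subset_left))
  rw [Finset.sum_congr rfl fun x _ => hterm x, ← Finset.sum_mul,
    sum_measureReal_inter_preimage_singleton hX]

/-- Theorem 1 (probabilistic core): if each `Z t` (for `1 ≤ t ≤ m`) is
conditionally independent of the tuple `(Y, Z 0, …, Z (t-2))` given `Z (t-1)`,
then for every `1 ≤ j ≤ m` we have `Y ⊥ Z j | σ(Z (j-1))`, and hence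
`I[Y : Z j | Z (j-1)] = 0`. -/
theorem markov_chain_screens_off
    {Ω U : Type*} {mΩ : MeasurableSpace Ω} [StandardBorelSpace Ω]
    {S : ℕ → Type*} [∀ i, MeasurableSpace (S i)] [∀ i, Fintype (S i)]
    [∀ i, Nonempty (S i)] [∀ i, MeasurableSingletonClass (S i)]
    [MeasurableSpace U] [Fintype U] [Nonempty U] [MeasurableSingletonClass U]
    (μ : Measure Ω) [IsProbabilityMeasure μ]
    (m : ℕ) (Y : Ω → U) (Z : ∀ i, Ω → S i)
    (hY : Measurable Y) (hZ : ∀ i, Measurable (Z i))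
    (hchain : ∀ t : ℕ, 1 ≤ t → t ≤ m →
      CondIndepFun (MeasurableSpace.comap (Z (t - 1)) inferInstance)
        ((hZ (t - 1)).comap_le)
        (Z t) (fun ω => (Y ω, fun i : Fin (t - 1) => Z i ω)) μ) :
    ∀ j : ℕ, 1 ≤ j → j ≤ m →
      CondIndepFun (MeasurableSpace.comap (Z (j - 1)) inferInstance)
        ((hZ (j - 1)).comap_le) Y (Z j) μ ∧
      condMutualInfo' μ Y (Z j) (Z (j - 1)) = 0 := by
  intro j hj hjm
  have hind : Y ⟂ᵢ[Z (j - 1), hZ (j - 1); μ] Z j :=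
    ((hchain j hj hjm).comp measurable_id measurable_fst).symm
  refine ⟨hind, ?_⟩
  rw [condMutualInfo', condEntropy'_prod_eq_of_forall_mul_eq (hZ j), sub_self]
  intro w y x
  exact hind.measureReal_inter_mul_eq (hZ (j - 1)) hY (hZ j) w
    (measurableSet_singleton y) (measurableSet_singleton x)
end

section
/- Let Y : Ω → U and X_0, X_1, …, X_T be random variables with X_j : Ω → S_j, and suppose that for every j with 1 ≤ j ≤ T there is a measurable map f_j : S_j → S_{j−1} with X_{j−1} = f_j ∘ X_j (each state is a deterministic function of the next, as CoT states accumulate information). Then the total information gained over the chain telescopes into the sum of the step-wise information gains: H[Y | X_0] − H[Y | X_T] = Σ_{j=1}^T I[Y : X_j | X_{j−1}]. (This follows by summing the paper's Proposition 1 over the steps of a Chain-of-Thought reasoning process.) -/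
open MeasureTheory ProbabilityTheory

lemma condEntropy'_pair_of_comp {Ω S T U : Type*} [MeasurableSpace Ω]
    [MeasurableSpace S] [MeasurableSpace T] [MeasurableSpace U]
    [Fintype S] [Fintype T] [Fintype U]
    (μ : Measure Ω) (Y : Ω → U) (X : Ω → S) (f : S → T) :
    condEntropy' μ Y (fun ω => (X ω, f (X ω))) = condEntropy' μ Y X := by
  unfold condEntropy'
  congr 1
  rw [Fintype.sum_prod_type]
  refine Finset.sum_congr rfl fun x _ => ?_
  rw [Finset.sum_eq_single (f x)]
  · have h : (fun ω => (X ω, f (X ω))) ⁻¹' {(x, f x)} = X ⁻¹' {x} := by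
      ext ω
      simp only [Set.mem_preimage, Set.mem_singleton_iff, Prod.mk.injEq]
      exact ⟨fun h => h.1, fun h => ⟨h, by rw [h]⟩⟩
    rw [h]
  · intro z _ hz
    have h : (fun ω => (X ω, f (X ω))) ⁻¹' {(x, z)} = ∅ := by
      ext ω
      simp only [Set.mem_preimage, Set.mem_singleton_iff, Prod.mk.injEq,
        Set.mem_empty_iff_false, iff_false, not_and]
      intro hx hfz
      exact hz (by rw [← hfz, hx])
    refine Finset.sum_eq_zero fun y _ => ?_
    rw [h]
    simp
  · simp

/-- Telescoping information gain along a Chain-of-Thought: if each state is a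
deterministic (measurable) function of the next, then
`H[Y | X_0] - H[Y | X_T] = Σ_{j=1}^T I[Y : X_j | X_{j-1}]`. -/
theorem information_gain_telescopes
    {Ω U : Type*} [MeasurableSpace Ω]
    {S : ℕ → Type*} [∀ i, MeasurableSpace (S i)] [∀ i, Fintype (S i)]
    [∀ i, Nonempty (S i)] [∀ i, MeasurableSingletonClass (S i)]
    [MeasurableSpace U] [Fintype U] [Nonempty U] [MeasurableSingletonClass U]
    (μ : Measure Ω) [IsProbabilityMeasure μ]
    (T : ℕ) (Y : Ω → U) (X : ∀ i, Ω → S i)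
    (hY : Measurable Y) (hX : ∀ i, Measurable (X i))
    (hchain : ∀ j : ℕ, 1 ≤ j → j ≤ T →
      ∃ f : S j → S (j - 1), Measurable f ∧ X (j - 1) = f ∘ X j) :
    condEntropy' μ Y (X 0) - condEntropy' μ Y (X T)
      = ∑ j ∈ Finset.Icc 1 T, condMutualInfo' μ Y (X j) (X (j - 1)) := by
  induction T with
  | zero => simp
  | succ T ih =>
    rw [Finset.sum_Icc_succ_top (by omega : 1 ≤ T + 1),
      ← ih (fun j h1 h2 => hchain j h1 (by omega))]
    obtain ⟨f, hf, hcomp⟩ := hchain (T + 1) (by omega) le_rfl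
    have : condMutualInfo' μ Y (X (T + 1)) (X (T + 1 - 1))
        = condEntropy' μ Y (X T) - condEntropy' μ Y (X (T + 1)) := by
      unfold condMutualInfo'
      have h2 : condEntropy' μ Y (fun ω => (X (T + 1) ω, X (T + 1 - 1) ω))
          = condEntropy' μ Y (X (T + 1)) := by
        have : (fun ω => (X (T + 1) ω, X (T + 1 - 1) ω))
            = fun ω => (X (T + 1) ω, f (X (T + 1) ω)) := by
          funext ω
          rw [hcomp]
          rfl
        rw [this, condEntropy'_pair_of_comp]
      rw [h2]
      rfl
    rw [this]
    ring
end
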